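/- arXiv:2003.03165 — 5 statements merged into one kernel-verified Lean document; each statement's English description precedes it below -/
import Mathlib

section
/- For any p > 1 and any two probability measures μ, ν on the interval I = [0,1], the infimum of ∫_{I×I} |x−y|^p d|ρ|(x,y) over all finite signed measures ρ on I×I whose first marginal is μ and second marginal is ν equals 0. -/
/-!
Signed plans may route mass through intermediate configurations and cancel it afterwards.
Let `s k` translate `[0,1]` to the left by `k / n`, clamped at `0`, so that `s 0 = id` and
`s n ≡ 0`. The plan
`(id, id)₊μ + ∑ₖ ((s k, s (k+1))₊μ - (s k, s k)₊μ) - ∑ₖ ((s k, s (k+1))₊ν - (s k, s k)₊ν)`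
has first marginal `μ`, while its second marginal telescopes to `μ + (δ₀ - μ) - (δ₀ - ν) = ν`.
The diagonal pieces cost nothing, and each of the `2n` off-diagonal pieces has mass `1` and
moves points by at most `1 / n`, so the cost is at most `2n · n⁻ᵖ`, which tends to `0` as `p > 1`.
-/

open MeasureTheory Filter Topology
open scoped ENNReal

namespace MeasureTheory

variable {α X : Type*} [MeasurableSpace α] [MeasurableSpace X]

lemma Measure.toSignedMeasure_map (κ : Measure α) [IsFiniteMeasure κ] {f : α → X}
    (hf : Measurable f) : (κ.map f).toSignedMeasure = κ.toSignedMeasure.map f := by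
  ext i hi
  rw [VectorMeasure.map_apply _ hf hi, Measure.toSignedMeasure_apply_measurable (hf hi),
    Measure.toSignedMeasure_apply_measurable hi, map_measureReal_apply hf hi]

lemma SignedMeasure.lintegral_totalVariation_sub_le {Y : Type*} [MeasurableSpace Y]
    (P N : Measure Y) [IsFiniteMeasure P] [IsFiniteMeasure N] (c : Y → ℝ≥0∞) :
    ∫⁻ y, c y ∂(P.toSignedMeasure - N.toSignedMeasure).totalVariation
      ≤ ∫⁻ y, c y ∂P + ∫⁻ y, c y ∂N := by
  rw [← lintegral_add_measure]
  refine lintegral_mono' ?_ le_rfl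
  rw [SignedMeasure.totalVariation_eq_variation]
  simpa using VectorMeasure.variation_sub_le (μ := P.toSignedMeasure) (ν := N.toSignedMeasure)

noncomputable def stepPlan (κ : Measure α) [IsFiniteMeasure κ] (f g : α → X) :
    SignedMeasure (X × X) :=
  (κ.map fun x => (f x, g x)).toSignedMeasure - (κ.map fun x => (f x, f x)).toSignedMeasure

section stepPlan

variable (κ : Measure α) [IsFiniteMeasure κ] {f g : α → X}

lemma map_stepPlan {Y : Type*} [MeasurableSpace Y] (hf : Measurable f) (hg : Measurable g)
    {φ : X × X → Y} (hφ : Measurable φ) :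
    (stepPlan κ f g).map φ = (κ.map fun x => φ (f x, g x)).toSignedMeasure
      - (κ.map fun x => φ (f x, f x)).toSignedMeasure := by
  rw [stepPlan, ← VectorMeasure.mapGm_apply, map_sub, VectorMeasure.mapGm_apply,
    VectorMeasure.mapGm_apply, ← Measure.toSignedMeasure_map _ hφ,
    ← Measure.toSignedMeasure_map _ hφ]
  congr 1 <;> exact Measure.toSignedMeasure_congr (Measure.map_map hφ (by fun_prop))

lemma stepPlan_map_fst (hf : Measurable f) (hg : Measurable g) :
    (stepPlan κ f g).map Prod.fst = 0 := by
  rw [map_stepPlan κ hf hg measurable_fst, sub_self]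

lemma stepPlan_map_snd (hf : Measurable f) (hg : Measurable g) :
    (stepPlan κ f g).map Prod.snd = (κ.map g).toSignedMeasure - (κ.map f).toSignedMeasure :=
  map_stepPlan κ hf hg measurable_snd

lemma lintegral_totalVariation_stepPlan_le {c : X × X → ℝ≥0∞} (hc : ∀ y, c (y, y) = 0) :
    ∫⁻ z, c z ∂(stepPlan κ f g).totalVariation ≤ ∫⁻ x, c (f x, g x) ∂κ := by
  calc ∫⁻ z, c z ∂(stepPlan κ f g).totalVariation
      ≤ ∫⁻ z, c z ∂(κ.map fun x => (f x, g x)) + ∫⁻ z, c z ∂(κ.map fun x => (f x, f x)) :=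
        SignedMeasure.lintegral_totalVariation_sub_le _ _ c
    _ ≤ ∫⁻ x, c (f x, g x) ∂κ + ∫⁻ x, c (f x, f x) ∂κ :=
        add_le_add (lintegral_map_le _ _) (lintegral_map_le _ _)
    _ = ∫⁻ x, c (f x, g x) ∂κ := by simp [hc]

end stepPlan

noncomputable def chainPlan (κ : Measure α) [IsFiniteMeasure κ] (s : ℕ → α → X) (n : ℕ) :
    SignedMeasure (X × X) :=
  ∑ k ∈ Finset.range n, stepPlan κ (s k) (s (k + 1))

section chainPlan

variable (κ : Measure α) [IsFiniteMeasure κ] {s : ℕ → α → X} (n : ℕ)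

lemma chainPlan_map_fst (hs : ∀ k, Measurable (s k)) : (chainPlan κ s n).map Prod.fst = 0 := by
  rw [chainPlan, ← VectorMeasure.mapGm_apply, map_sum]
  exact Finset.sum_eq_zero fun k _ => stepPlan_map_fst κ (hs k) (hs (k + 1))

lemma chainPlan_map_snd (hs : ∀ k, Measurable (s k)) :
    (chainPlan κ s n).map Prod.snd
      = (κ.map (s n)).toSignedMeasure - (κ.map (s 0)).toSignedMeasure := by
  rw [chainPlan, ← VectorMeasure.mapGm_apply, map_sum,
    ← Finset.sum_range_sub fun k => (κ.map (s k)).toSignedMeasure]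
  exact Finset.sum_congr rfl fun k _ => stepPlan_map_snd κ (hs k) (hs (k + 1))

lemma lintegral_totalVariation_chainPlan_le {c : X × X → ℝ≥0∞} (hc : ∀ y, c (y, y) = 0)
    {ε : ℝ≥0∞} (hstep : ∀ k < n, ∀ x, c (s k x, s (k + 1) x) ≤ ε) :
    ∫⁻ z, c z ∂(chainPlan κ s n).totalVariation ≤ n * (κ Set.univ * ε) := by
  calc ∫⁻ z, c z ∂(chainPlan κ s n).totalVariation
      ≤ ∑ k ∈ Finset.range n, ∫⁻ z, c z ∂(stepPlan κ (s k) (s (k + 1))).totalVariation := by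
        rw [← lintegral_finsetSum_measure]
        refine lintegral_mono' ?_ le_rfl
        simp only [chainPlan, SignedMeasure.totalVariation_eq_variation]
        exact VectorMeasure.variation_finsetSum_le _ _
    _ ≤ ∑ k ∈ Finset.range n, ∫⁻ _, ε ∂κ := by
        refine Finset.sum_le_sum fun k hk => ?_
        exact (lintegral_totalVariation_stepPlan_le κ hc).trans
          (lintegral_mono (hstep k (Finset.mem_range.mp hk)))
    _ = n * (κ Set.univ * ε) := by simp [mul_comm]

end chainPlan

noncomputable def contractionPlan (μ ν : Measure X) [IsFiniteMeasure μ] [IsFiniteMeasure ν]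
    (s : ℕ → X → X) (n : ℕ) : SignedMeasure (X × X) :=
  (μ.map fun x => (x, x)).toSignedMeasure + chainPlan μ s n - chainPlan ν s n

section contractionPlan

variable (μ ν : Measure X) {s : ℕ → X → X} (n : ℕ)

lemma map_diag_toSignedMeasure [IsFiniteMeasure μ] {φ : X × X → X} (hφ : Measurable φ)
    (hφ_diag : ∀ x, φ (x, x) = x) :
    (μ.map fun x => (x, x)).toSignedMeasure.map φ = μ.toSignedMeasure := by
  rw [← Measure.toSignedMeasure_map _ hφ]
  refine Measure.toSignedMeasure_congr ?_
  rw [Measure.map_map hφ (by fun_prop)]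
  simp only [Function.comp_def, hφ_diag, Measure.map_id']

lemma contractionPlan_map_fst [IsFiniteMeasure μ] [IsFiniteMeasure ν]
    (hs : ∀ k, Measurable (s k)) :
    (contractionPlan μ ν s n).map Prod.fst = μ.toSignedMeasure := by
  rw [contractionPlan, ← VectorMeasure.mapGm_apply, map_sub, map_add]
  simp only [VectorMeasure.mapGm_apply, chainPlan_map_fst _ _ hs,
    map_diag_toSignedMeasure μ measurable_fst fun _ => rfl, add_zero, sub_zero]

lemma contractionPlan_map_snd [IsProbabilityMeasure μ] [IsProbabilityMeasure ν]
    (hs : ∀ k, Measurable (s k)) (hs₀ : s 0 = id) {x₀ : X} (hsn : s n = fun _ => x₀) :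
    (contractionPlan μ ν s n).map Prod.snd = ν.toSignedMeasure := by
  rw [contractionPlan, ← VectorMeasure.mapGm_apply, map_sub, map_add]
  simp only [VectorMeasure.mapGm_apply, chainPlan_map_snd _ _ hs,
    map_diag_toSignedMeasure μ measurable_snd fun _ => rfl, hs₀, Measure.map_id, hsn,
    Measure.map_const, measure_univ, one_smul]
  abel

lemma lintegral_totalVariation_contractionPlan_le [IsProbabilityMeasure μ]
    [IsProbabilityMeasure ν] {c : X × X → ℝ≥0∞} (hc : ∀ y, c (y, y) = 0) {ε : ℝ≥0∞}
    (hstep : ∀ k < n, ∀ x, c (s k x, s (k + 1) x) ≤ ε) :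
    ∫⁻ z, c z ∂(contractionPlan μ ν s n).totalVariation ≤ 2 * n * ε := by
  have hdiag : ∫⁻ z, c z ∂(μ.map fun x => (x, x)) = 0 :=
    le_antisymm ((lintegral_map_le _ _).trans_eq (by simp [hc])) bot_le
  calc ∫⁻ z, c z ∂(contractionPlan μ ν s n).totalVariation
      ≤ ∫⁻ z, c z ∂(μ.map fun x => (x, x)) + ∫⁻ z, c z ∂(chainPlan μ s n).totalVariation
          + ∫⁻ z, c z ∂(chainPlan ν s n).totalVariation := by
        rw [← lintegral_add_measure, ← lintegral_add_measure]
        refine lintegral_mono' ?_ le_rfl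
        simp only [contractionPlan, SignedMeasure.totalVariation_eq_variation]
        refine VectorMeasure.variation_sub_le.trans (add_le_add_left ?_ _)
        simpa using VectorMeasure.variation_add_le (μ := (μ.map fun x => (x, x)).toSignedMeasure)
          (ν := chainPlan μ s n)
    _ ≤ 0 + n * (1 * ε) + n * (1 * ε) := by
        rw [hdiag]
        gcongr
        · simpa using lintegral_totalVariation_chainPlan_le μ n hc hstep
        · simpa using lintegral_totalVariation_chainPlan_le ν n hc hstep
    _ = 2 * n * ε := by ring

end contractionPlan

end MeasureTheory

lemma Real.sInf_eq_zero_of_tendsto {S : Set ℝ} (hS : ∀ x ∈ S, 0 ≤ x) {u : ℕ → ℝ}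
    (hu : Tendsto u atTop (𝓝 0)) (hle : ∀ᶠ n in atTop, ∃ x ∈ S, x ≤ u n) : sInf S = 0 := by
  obtain ⟨n, x, hx, -⟩ := hle.exists
  refine le_antisymm (ge_of_tendsto hu ?_) (le_csInf ⟨x, hx⟩ hS)
  filter_upwards [hle] with n ⟨y, hy, hyn⟩
  exact (csInf_le ⟨0, hS⟩ hy).trans hyn

lemma tendsto_natCast_mul_one_div_rpow {p : ℝ} (hp : 1 < p) :
    Tendsto (fun n : ℕ => n * (1 / n : ℝ) ^ p) atTop (𝓝 0) := by
  have h := tendsto_one_div_atTop_nhds_zero_nat.rpow_const (p := p - 1) (Or.inr (by linarith))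
  rw [Real.zero_rpow (by linarith)] at h
  refine h.congr' ((eventually_ne_atTop 0).mono fun n hn => ?_)
  rw [Real.rpow_sub (by positivity), Real.rpow_one]
  field_simp

noncomputable def clampedShift (n k : ℕ) (x : Set.Icc (0 : ℝ) 1) : Set.Icc (0 : ℝ) 1 :=
  Set.projIcc 0 1 zero_le_one (x - k / n)

lemma measurable_clampedShift (n k : ℕ) : Measurable (clampedShift n k) :=
  (continuous_projIcc.comp (by fun_prop)).measurable

lemma clampedShift_zero (n : ℕ) : clampedShift n 0 = id := by
  funext x
  simp [clampedShift]

lemma clampedShift_self {n : ℕ} (hn : n ≠ 0) :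
    clampedShift n n = fun _ => ⟨0, Set.left_mem_Icc.2 zero_le_one⟩ := by
  funext x
  refine Set.projIcc_of_le_left _ ?_
  rw [div_self (Nat.cast_ne_zero.2 hn)]
  linarith [x.2.2]

lemma abs_clampedShift_sub_succ_le (n k : ℕ) (x : Set.Icc (0 : ℝ) 1) :
    |(clampedShift n k x : ℝ) - clampedShift n (k + 1) x| ≤ 1 / n :=
  (Set.abs_projIcc_sub_projIcc _).trans_eq <| by
    rw [Nat.cast_succ, ← abs_of_nonneg (one_div_nonneg.2 (Nat.cast_nonneg (α := ℝ) n))]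
    ring_nf

section UnitInterval

variable (μ ν : Measure (Set.Icc (0 : ℝ) 1)) [IsProbabilityMeasure μ] [IsProbabilityMeasure ν]

lemma integral_totalVariation_contractionPlan_clampedShift_le {p : ℝ} (hp : 0 < p) (n : ℕ) :
    ∫ z, |(z.1 : ℝ) - z.2| ^ p ∂(contractionPlan μ ν (clampedShift n) n).totalVariation
      ≤ 2 * n * (1 / n) ^ p := by
  rw [integral_eq_lintegral_of_nonneg_ae (ae_of_all _ fun z => by positivity)
    (by fun_prop : Measurable fun z : Set.Icc (0 : ℝ) 1 × Set.Icc (0 : ℝ) 1 =>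
      |(z.1 : ℝ) - z.2| ^ p).aestronglyMeasurable]
  refine ENNReal.toReal_le_of_le_ofReal (by positivity) ?_
  calc ∫⁻ z, ENNReal.ofReal (|(z.1 : ℝ) - z.2| ^ p)
        ∂(contractionPlan μ ν (clampedShift n) n).totalVariation
      ≤ 2 * n * ENNReal.ofReal ((1 / n) ^ p) :=
        lintegral_totalVariation_contractionPlan_le μ ν n (by simp [hp.ne'])
          fun k _ x => ENNReal.ofReal_le_ofReal <|
            Real.rpow_le_rpow (abs_nonneg _) (abs_clampedShift_sub_succ_le n k x) hp.le
    _ = ENNReal.ofReal (2 * n * (1 / n) ^ p) := by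
        rw [ENNReal.ofReal_mul (by positivity), ENNReal.ofReal_mul (by positivity)]
        simp

end UnitInterval

/-- The "signed p-Wasserstein distance" between any two probability measures on `[0,1]`
is zero: the infimum over signed transport plans `ρ` (finite signed measures on
`[0,1] × [0,1]` with marginals `μ` and `ν`) of `∫ |x - y|^p d|ρ|` equals `0`. -/
theorem signed_Wp_zero (p : ℝ) (hp : 1 < p)
    (μ ν : Measure ↥(Set.Icc (0:ℝ) 1))
    [IsProbabilityMeasure μ] [IsProbabilityMeasure ν] :
    sInf { c : ℝ | ∃ ρ : SignedMeasure (↥(Set.Icc (0:ℝ) 1) × ↥(Set.Icc (0:ℝ) 1)),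
        VectorMeasure.map ρ Prod.fst = μ.toSignedMeasure ∧
        VectorMeasure.map ρ Prod.snd = ν.toSignedMeasure ∧
        c = ∫ z, |(z.1 : ℝ) - (z.2 : ℝ)| ^ p ∂ρ.totalVariation } = 0 := by
  have hcost : Tendsto (fun n : ℕ => 2 * n * (1 / n : ℝ) ^ p) atTop (𝓝 0) := by
    simpa only [mul_assoc, mul_zero] using (tendsto_natCast_mul_one_div_rpow hp).const_mul 2
  refine Real.sInf_eq_zero_of_tendsto ?_ hcost ((eventually_ne_atTop 0).mono fun n hn => ?_)
  · rintro c ⟨ρ, -, -, rfl⟩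
    exact integral_nonneg fun z => by positivity
  · have hs := measurable_clampedShift n
    exact ⟨_, ⟨_, contractionPlan_map_fst μ ν n hs,
      contractionPlan_map_snd μ ν n hs (clampedShift_zero n) (clampedShift_self hn), rfl⟩,
      integral_totalVariation_contractionPlan_clampedShift_le μ ν (by linarith) n⟩
end

section
/- Consequently, for p > 1, the infimum over signed transport plans ρ from δ_0 to δ_1 of ∫_{[0,1]^2} |x−y|^p d|ρ|(x,y) tends to 0, i.e. the 'signed p-Wasserstein distance' between δ_0 and δ_1 is 0. -/
/-!
Move the unit mass from `0` to `1` in `n + 1` hops along the grid `tᵢ = i / (n + 1)`: the signed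
plan `∑ᵢ δ_(tᵢ, tᵢ₊₁) - ∑_{0 < i ≤ n} δ_(tᵢ, tᵢ)` has marginals `δ₀` and `δ₁` because both sums
telescope. Its total variation is at most the sum of the two positive parts, the diagonal atoms
cost nothing, and each hop costs `(n + 1)^(-p)`, so the cost is at most `(n + 1)^(1 - p) → 0`
for `p > 1`.
-/

open MeasureTheory Finset Filter Topology

namespace MeasureTheory.Measure

variable {X : Type*} [MeasurableSpace X]

theorem totalVariation_toSignedMeasure_sub_le (μ ν : Measure X) [IsFiniteMeasure μ]
    [IsFiniteMeasure ν] : (μ.toSignedMeasure - ν.toSignedMeasure).totalVariation ≤ μ + ν := by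
  rw [SignedMeasure.totalVariation_eq_variation]
  refine VectorMeasure.variation_le_of_forall_enorm_le fun E hE => ?_
  rw [toSignedMeasure_sub_apply hE, add_apply]
  calc ‖μ.real E - ν.real E‖ₑ ≤ ‖μ.real E‖ₑ + ‖ν.real E‖ₑ := enorm_sub_le
    _ = μ E + ν E := by simp [measureReal_def]

theorem map_toSignedMeasure_sub_of_map_eq_add {Y : Type*} [MeasurableSpace Y] {μ ν : Measure X}
    {ξ : Measure Y} [IsFiniteMeasure μ] [IsFiniteMeasure ν] [IsFiniteMeasure ξ] {f : X → Y}
    (hf : Measurable f) (h : μ.map f = ξ + ν.map f) :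
    (μ.toSignedMeasure - ν.toSignedMeasure).map f = ξ.toSignedMeasure := by
  ext s hs
  have hs' := congrArg (fun m : Measure Y => m.real s) h
  rw [measureReal_add_apply, map_measureReal_apply hf hs, map_measureReal_apply hf hs] at hs'
  rw [VectorMeasure.map_apply _ hf hs, toSignedMeasure_sub_apply (hf hs), hs',
    toSignedMeasure_apply_measurable hs, add_sub_cancel_right]

end MeasureTheory.Measure

namespace MeasureTheory.SignedMeasure

variable {X : Type*} [MeasurableSpace X] (x : ℕ → X) (n : ℕ)

/-- The negative atoms at the intermediate points `x 1, …, x n` cancel the mass that the hops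
`x i → x (i + 1)` deliver there and pick up again. -/
noncomputable def chainPlan : SignedMeasure (X × X) :=
  (∑ i ∈ range (n + 1), Measure.dirac (x i, x (i + 1))).toSignedMeasure
    - (∑ i ∈ range n, Measure.dirac (x (i + 1), x (i + 1))).toSignedMeasure

theorem map_fst_chainPlan :
    (chainPlan x n).map Prod.fst = (Measure.dirac (x 0)).toSignedMeasure := by
  refine Measure.map_toSignedMeasure_sub_of_map_eq_add measurable_fst ?_
  simp only [Measure.map_finset_sum measurable_fst.aemeasurable, Measure.map_dirac' measurable_fst]
  rw [sum_range_succ', add_comm]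

theorem map_snd_chainPlan :
    (chainPlan x n).map Prod.snd = (Measure.dirac (x (n + 1))).toSignedMeasure := by
  refine Measure.map_toSignedMeasure_sub_of_map_eq_add measurable_snd ?_
  simp only [Measure.map_finset_sum measurable_snd.aemeasurable, Measure.map_dirac' measurable_snd]
  rw [sum_range_succ, add_comm]

theorem integral_totalVariation_chainPlan_le {c : X × X → ℝ} (hc : StronglyMeasurable c)
    (hc_nonneg : 0 ≤ c) (hc_diag : ∀ y, c (y, y) = 0) :
    ∫ z, c z ∂(chainPlan x n).totalVariation ≤ ∑ i ∈ range (n + 1), c (x i, x (i + 1)) := by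
  have hdirac (z : X × X) : Integrable c (Measure.dirac z) := integrable_dirac' hc enorm_lt_top
  have hsteps := integrable_finsetSum_measure.2 fun i (_ : i ∈ range (n + 1)) =>
    hdirac (x i, x (i + 1))
  have hstops := integrable_finsetSum_measure.2 fun i (_ : i ∈ range n) =>
    hdirac (x (i + 1), x (i + 1))
  calc ∫ z, c z ∂(chainPlan x n).totalVariation
      ≤ ∫ z, c z ∂(∑ i ∈ range (n + 1), Measure.dirac (x i, x (i + 1))
          + ∑ i ∈ range n, Measure.dirac (x (i + 1), x (i + 1))) :=
        integral_mono_measure (Measure.totalVariation_toSignedMeasure_sub_le _ _)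
          (Eventually.of_forall hc_nonneg) (hsteps.add_measure hstops)
    _ = ∑ i ∈ range (n + 1), c (x i, x (i + 1)) := by
      rw [integral_add_measure hsteps hstops, integral_finsetSum_measure fun _ _ => hdirac _,
        integral_finsetSum_measure fun _ _ => hdirac _]
      simp [integral_dirac' _ _ hc, hc_diag]

end MeasureTheory.SignedMeasure

open Set SignedMeasure

noncomputable def unitGrid (n i : ℕ) : Icc (0:ℝ) 1 :=
  projIcc 0 1 zero_le_one (i / (n + 1))

theorem coe_unitGrid {n i : ℕ} (hi : i ≤ n + 1) : (unitGrid n i : ℝ) = i / (n + 1) := by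
  rw [unitGrid, projIcc_of_mem]
  exact ⟨by positivity, div_le_one_of_le₀ (by exact_mod_cast hi) (by positivity)⟩

theorem unitGrid_zero (n : ℕ) : unitGrid n 0 = ⟨0, by norm_num⟩ := by
  simp [unitGrid]

theorem unitGrid_last (n : ℕ) : unitGrid n (n + 1) = ⟨1, by norm_num⟩ := by
  rw [unitGrid, Nat.cast_succ, div_self (by positivity), projIcc_right]

theorem sum_abs_sub_unitGrid_rpow (n : ℕ) (p : ℝ) :
    ∑ i ∈ range (n + 1), |(unitGrid n i : ℝ) - unitGrid n (i + 1)| ^ p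
      = ((n : ℝ) + 1) ^ (1 - p) := by
  have hn : (0:ℝ) < n + 1 := by positivity
  have hstep : ∀ i ∈ range (n + 1),
      |(unitGrid n i : ℝ) - unitGrid n (i + 1)| ^ p = ((n : ℝ) + 1)⁻¹ ^ p := by
    intro i hi
    have hi := mem_range.1 hi
    rw [coe_unitGrid hi.le, coe_unitGrid hi, Nat.cast_succ, ← sub_div, sub_add_cancel_left,
      abs_div, abs_neg, abs_one, abs_of_pos hn, one_div]
  rw [sum_congr rfl hstep, sum_const, card_range, nsmul_eq_mul, Nat.cast_succ,
    Real.inv_rpow hn.le, ← Real.rpow_neg hn.le, Real.rpow_sub hn, Real.rpow_one,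
    div_eq_mul_inv, Real.rpow_neg hn.le]

theorem tendsto_natCast_add_one_rpow_of_neg {q : ℝ} (hq : q < 0) :
    Tendsto (fun n : ℕ => ((n : ℝ) + 1) ^ q) atTop (𝓝 0) := by
  have := (tendsto_rpow_neg_atTop (neg_pos.2 hq)).comp
    (tendsto_natCast_atTop_atTop.atTop_add tendsto_const_nhds (C := (1:ℝ)))
  simpa [Function.comp_def] using this

theorem Real.sInf_eq_zero_of_nonneg_of_tendsto {S : Set ℝ} {u : ℕ → ℝ} (hS : ∀ c ∈ S, 0 ≤ c)
    (hu : ∀ n, ∃ c ∈ S, c ≤ u n) (hlim : Tendsto u atTop (𝓝 0)) : sInf S = 0 := by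
  obtain ⟨c, hc, -⟩ := hu 0
  refine le_antisymm (ge_of_tendsto' hlim fun n => ?_) (le_csInf ⟨c, hc⟩ hS)
  obtain ⟨c, hc, hcu⟩ := hu n
  exact (csInf_le ⟨0, hS⟩ hc).trans hcu

/-- The signed `p`-Wasserstein distance between `δ_0` and `δ_1` on `[0,1]` is `0`:
for `p > 1`, the infimum over signed transport plans `ρ` from `δ_0` to `δ_1` of
`∫_{[0,1]²} |x-y|^p d|ρ|(x,y)` equals `0`. -/
theorem signed_Wp_dirac_zero (p : ℝ) (hp : 1 < p) :
    sInf { c : ℝ | ∃ ρ : SignedMeasure (↥(Set.Icc (0:ℝ) 1) × ↥(Set.Icc (0:ℝ) 1)),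
        VectorMeasure.map ρ Prod.fst
          = (Measure.dirac (⟨0, by norm_num⟩ : ↥(Set.Icc (0:ℝ) 1))).toSignedMeasure ∧
        VectorMeasure.map ρ Prod.snd
          = (Measure.dirac (⟨1, by norm_num⟩ : ↥(Set.Icc (0:ℝ) 1))).toSignedMeasure ∧
        c = ∫ z, |(z.1 : ℝ) - (z.2 : ℝ)| ^ p ∂ρ.totalVariation } = 0 := by
  set cost : Icc (0:ℝ) 1 × Icc (0:ℝ) 1 → ℝ := fun z => |(z.1 : ℝ) - (z.2 : ℝ)| ^ p
  have cost_nonneg : 0 ≤ cost := fun z => Real.rpow_nonneg (abs_nonneg _) p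
  refine Real.sInf_eq_zero_of_nonneg_of_tendsto ?_
    (fun n => ⟨∫ z, cost z ∂(chainPlan (unitGrid n) n).totalVariation, ?_, ?_⟩)
    (tendsto_natCast_add_one_rpow_of_neg (sub_neg.2 hp))
  · rintro c ⟨ρ, -, -, rfl⟩
    exact integral_nonneg cost_nonneg
  · exact ⟨chainPlan (unitGrid n) n, (map_fst_chainPlan _ n).trans (by rw [unitGrid_zero]),
      (map_snd_chainPlan _ n).trans (by rw [unitGrid_last]), rfl⟩
  · refine (integral_totalVariation_chainPlan_le _ n (by fun_prop) cost_nonneg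
      fun y => ?_).trans_eq (sum_abs_sub_unitGrid_rpow n p)
    simp [cost, Real.zero_rpow (by linarith : p ≠ 0)]
end

section
/- Let f : [0,1]^d → ℝ be integrable with ∫ f = 0 and satisfy f(x_{d−1}, 1−x_d) = −f(x_{d−1}, x_d), with f ≥ 0 on {x_d ≥ 1/2}. Then W₁(f⁺, f⁻) ≤ 2∫_{[0,1]^d} (x_d − 1/2)·f⁺(x) dx, realized by the reflection transport plan ρ(x,·) = f⁺(x) δ_{x̃}, where x̃ = (x_{d−1}, 1 − x_d). -/
open MeasureTheory

/-- The 1-Wasserstein (Vaserstein) distance, via Kantorovich–Rubinstein duality. -/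
noncomputable def W1 {α : Type*} [MeasurableSpace α] [PseudoMetricSpace α]
    (μ ν : Measure α) : ℝ :=
  sSup { c : ℝ | ∃ h : α → ℝ, LipschitzWith 1 h ∧ c = |(∫ x, h x ∂μ) - ∫ x, h x ∂ν| }

/-!
Reflecting the last coordinate about `1/2` is a measure-preserving involution `σ` of the cube
that maps `f⁺` onto `f⁻`, since `f ∘ σ = -f`. Hence for every `1`-Lipschitz test function `h`,
`∫ h f⁺ - ∫ h f⁻ = ∫ (h x - h (σ x)) f⁺(x) dx`, which is at most
`∫ dist x (σ x) f⁺(x) dx = ∫ |2 x_d - 1| f⁺(x) dx`. As `f⁺` vanishes on `{x_d < 1/2}`,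
this is `2 ∫ (x_d - 1/2) f⁺(x) dx`.
-/

open Set Function

theorem integral_withDensity_ofReal {α : Type*} [MeasurableSpace α] {μ : Measure α}
    {f : α → ℝ} (hf : AEMeasurable f μ) (g : α → ℝ) :
    ∫ x, g x ∂μ.withDensity (fun x => ENNReal.ofReal (f x)) = ∫ x, max (f x) 0 * g x ∂μ := by
  change ∫ x, g x ∂μ.withDensity (fun x => ((f x).toNNReal : ENNReal)) = _
  have hf' : AEMeasurable (fun x => (f x).toNNReal) μ :=
    measurable_real_toNNReal.comp_aemeasurable hf
  rw [integral_withDensity_eq_integral_smul₀ hf']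
  simp [NNReal.smul_def, Real.coe_toNNReal']

section Reflection

variable {α : Type*} [PseudoMetricSpace α] [MeasurableSpace α] [OpensMeasurableSpace α]
  {μ : Measure α}

theorem abs_integral_mul_sub_integral_mul_comp_le {p h : α → ℝ} {σ : α → α}
    (hp : AEStronglyMeasurable p μ) (hp0 : ∀ x, 0 ≤ p x) (hh : LipschitzWith 1 h)
    (hσ : Measurable σ) (hint : Integrable (fun x => dist x (σ x) * p x) μ) :
    |∫ x, p x * h x ∂μ - ∫ x, p x * h (σ x) ∂μ| ≤ ∫ x, dist x (σ x) * p x ∂μ := by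
  have hmono : ∀ x, ‖p x * h x - p x * h (σ x)‖ ≤ dist x (σ x) * p x := fun x => by
    rw [← mul_sub, norm_mul, Real.norm_of_nonneg (hp0 x), mul_comm, ← dist_eq_norm]
    exact mul_le_mul_of_nonneg_right (by simpa using hh.dist_le_mul x (σ x)) (hp0 x)
  have hdiff : Integrable (fun x => p x * h x - p x * h (σ x)) μ := by
    refine hint.mono' ?_ (ae_of_all _ hmono)
    have hhm := hh.continuous.measurable
    exact (hp.mul hhm.aestronglyMeasurable).sub (hp.mul (hhm.comp hσ).aestronglyMeasurable)
  -- The two integrals are integrable or not together; in the second case both are `0`.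
  by_cases hI : Integrable (fun x => p x * h x) μ
  · rw [← integral_sub hI ((hI.sub hdiff).congr (ae_of_all _ fun x => by simp)),
      ← Real.norm_eq_abs]
    exact norm_integral_le_of_norm_le hint (ae_of_all _ hmono)
  · have hI' : ¬Integrable (fun x => p x * h (σ x)) μ := fun h' =>
      hI ((hdiff.add h').congr (ae_of_all _ fun x => by simp))
    rw [integral_undef hI, integral_undef hI', sub_zero, abs_zero]
    exact integral_nonneg fun x => mul_nonneg dist_nonneg (hp0 x)

theorem W1_withDensity_le_of_comp_eq_neg {σ : α → α} (hσ : MeasurePreserving σ μ μ)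
    (hinv : Involutive σ) {f : α → ℝ} (hf : AEMeasurable f μ) (hfσ : ∀ x, f (σ x) = -f x)
    (hint : Integrable (fun x => dist x (σ x) * max (f x) 0) μ) :
    W1 (μ.withDensity fun x => ENNReal.ofReal (f x))
        (μ.withDensity fun x => ENNReal.ofReal (-f x)) ≤
      ∫ x, dist x (σ x) * max (f x) 0 ∂μ := by
  refine Real.sSup_le ?_ (integral_nonneg fun x => mul_nonneg dist_nonneg (le_max_right _ _))
  rintro _ ⟨h, hh, rfl⟩
  have hσe := (MeasurableEquiv.ofInvolutive σ hinv hσ.measurable).measurableEmbedding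
  have hneg : ∫ x, h x ∂μ.withDensity (fun x => ENNReal.ofReal (-f x)) =
      ∫ x, max (f x) 0 * h (σ x) ∂μ := by
    rw [integral_withDensity_ofReal (f := fun x => -f x) hf.neg, ← hσ.integral_comp hσe]
    simp only [hfσ, neg_neg]
  rw [integral_withDensity_ofReal hf, hneg]
  exact abs_integral_mul_sub_integral_mul_comp_le (hf.max aemeasurable_const).aestronglyMeasurable
    (fun x => le_max_right _ _) hh hσ.measurable hint

end Reflection

def unitCube (ι : Type*) : Set (EuclideanSpace ℝ ι) := {x | ∀ i, x i ∈ Icc (0 : ℝ) 1}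

section Cube

variable {ι : Type*}

theorem measurableSet_unitCube [Countable ι] : MeasurableSet (unitCube ι) := by
  rw [unitCube, ofPred_forall]
  exact MeasurableSet.iInter fun i => measurableSet_Icc.preimage (by fun_prop)

variable [DecidableEq ι]

def coordReflect (i : ι) (x : EuclideanSpace ℝ ι) : EuclideanSpace ℝ ι :=
  WithLp.toLp 2 (Function.update x i (1 - x i))

theorem coordReflect_apply (i j : ι) (x : EuclideanSpace ℝ ι) :
    coordReflect i x j = if j = i then 1 - x i else x j :=
  Function.update_apply _ _ _ _

theorem coordReflect_involutive (i : ι) : Involutive (coordReflect i) := fun x => by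
  ext j
  by_cases hj : j = i <;> simp [coordReflect_apply, hj]

theorem coordReflect_preimage_unitCube (i : ι) : coordReflect i ⁻¹' unitCube ι = unitCube ι := by
  ext x
  refine forall_congr' fun j => ?_
  by_cases hj : j = i
  · subst hj
    simp only [coordReflect_apply, if_true, mem_Icc]
    constructor <;> intro h <;> constructor <;> linarith [h.1, h.2]
  · simp [coordReflect_apply, hj]

variable [Fintype ι]

theorem dist_coordReflect (i : ι) (x : EuclideanSpace ℝ ι) :
    dist x (coordReflect i x) = |2 * x i - 1| := by
  rw [EuclideanSpace.dist_eq, Finset.sum_eq_single i, Real.sqrt_sq dist_nonneg, Real.dist_eq]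
  · rw [coordReflect_apply, if_pos rfl]
    ring_nf
  · intro j _ hj
    simp [coordReflect_apply, hj]
  · simp

theorem dist_coordReflect_le_one (i : ι) {x : EuclideanSpace ℝ ι} (hx : x ∈ unitCube ι) :
    dist x (coordReflect i x) ≤ 1 := by
  rw [dist_coordReflect, abs_le]
  constructor <;> linarith [(hx i).1, (hx i).2]

theorem volume_preserving_coordReflect (i : ι) : MeasurePreserving (coordReflect i) := by
  have hcoord : ∀ j : ι, MeasurePreserving (fun t : ℝ => if j = i then 1 - t else t) := by
    intro j
    split_ifs
    · simpa [Function.comp_def, sub_eq_add_neg] using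
        (measurePreserving_add_left volume (1 : ℝ)).comp (Measure.measurePreserving_neg volume)
    · exact MeasurePreserving.id volume
  have hpi := measurePreserving_pi _ _ hcoord
  rw [← volume_pi] at hpi
  convert (PiLp.volume_preserving_toLp ι).comp (hpi.comp (PiLp.volume_preserving_ofLp ι)) using 1
  ext x j
  by_cases hj : j = i <;> simp [coordReflect_apply, hj]

theorem measurePreserving_coordReflect_restrict_unitCube (i : ι) :
    MeasurePreserving (coordReflect i) (volume.restrict (unitCube ι))
      (volume.restrict (unitCube ι)) := by
  simpa only [coordReflect_preimage_unitCube] using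
    (volume_preserving_coordReflect i).restrict_preimage measurableSet_unitCube

theorem IntegrableOn.dist_coordReflect_mul {g : EuclideanSpace ℝ ι → ℝ}
    (hg : IntegrableOn g (unitCube ι)) (i : ι) :
    IntegrableOn (fun x => dist x (coordReflect i x) * g x) (unitCube ι) := by
  refine hg.bdd_mul (c := 1)
    (measurable_id.dist (volume_preserving_coordReflect i).measurable).aestronglyMeasurable ?_
  filter_upwards [ae_restrict_mem measurableSet_unitCube] with x hx
  rw [Real.norm_of_nonneg dist_nonneg]
  exact dist_coordReflect_le_one i hx

end Cube

/-- If `f` on the unit cube has zero mean, is antisymmetric under reflection of the last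
coordinate about `1/2`, and is nonnegative on `{x_d ≥ 1/2}`, then
`W₁(f⁺, f⁻) ≤ 2 ∫ (x_d - 1/2) f⁺(x) dx` (realized by the reflection transport plan). -/
theorem reflection_transport_bound (d : ℕ) (hd : 1 ≤ d)
    (Q : Set (EuclideanSpace ℝ (Fin d)))
    (hQ : Q = {x | ∀ i, x i ∈ Set.Icc (0:ℝ) 1})
    (f : EuclideanSpace ℝ (Fin d) → ℝ)
    (hint : IntegrableOn f Q volume)
    (hsym : ∀ x : EuclideanSpace ℝ (Fin d),
      f (WithLp.toLp 2 (Function.update x ⟨d - 1, by omega⟩ (1 - x ⟨d - 1, by omega⟩))) = - f x)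
    (hpos : ∀ x ∈ Q, (1:ℝ)/2 ≤ x ⟨d - 1, by omega⟩ → 0 ≤ f x) :
    W1 ((volume.restrict Q).withDensity (fun x => ENNReal.ofReal (f x)))
        ((volume.restrict Q).withDensity (fun x => ENNReal.ofReal (- f x)))
      ≤ 2 * ∫ x in Q, (x ⟨d - 1, by omega⟩ - 1/2) * max (f x) 0 := by
  set i : Fin d := ⟨d - 1, by omega⟩
  change Q = unitCube (Fin d) at hQ
  subst hQ
  have hfσ : ∀ x, f (coordReflect i x) = -f x := hsym
  have hnonpos : ∀ x ∈ unitCube (Fin d), x i < 1 / 2 → f x ≤ 0 := fun x hx hxi => by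
    have := hpos (coordReflect i x) ((coordReflect_preimage_unitCube i).symm.subset hx)
      (by rw [coordReflect_apply, if_pos rfl]; linarith)
    linarith [hfσ x]
  have hcost : ∀ x ∈ unitCube (Fin d),
      dist x (coordReflect i x) * max (f x) 0 = 2 * ((x i - 1 / 2) * max (f x) 0) := by
    intro x hx
    rw [dist_coordReflect]
    rcases le_or_gt (1 / 2) (x i) with hxi | hxi
    · rw [abs_of_nonneg (by linarith)]; ring
    · simp [max_eq_right (hnonpos x hx hxi)]
  calc _ ≤ ∫ x in unitCube (Fin d), dist x (coordReflect i x) * max (f x) 0 :=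
        W1_withDensity_le_of_comp_eq_neg (measurePreserving_coordReflect_restrict_unitCube i)
          (coordReflect_involutive i) hint.aemeasurable hfσ
          (IntegrableOn.dist_coordReflect_mul hint.pos_part i)
    _ = _ := by
        rw [← integral_const_mul]
        exact setIntegral_congr_fun measurableSet_unitCube hcost
end

section
/- Let M be a measure space with finite measure V, f : M → ℝ integrable, B_L a kernel with ∫_M B_L(x,y)dV(y) = 1 for all x and ∫_M B_L(x,y) f(x) dV(x) = 0 for all y. Define σ as the pushforward of f⁻dV under the diagonal map x ↦ (x,x), and ρ_L(x,y) = B_L(x,y) f(x) dV(x) dV(y) + σ. Then the first marginal of ρ_L is f⁺dV and the second marginal is f⁻dV. -/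
open MeasureTheory

/-- Let `B_L` be a kernel with `∫ B_L(x,y) dV(y) = 1` for all `x` and
`∫ B_L(x,y) f(x) dV(x) = 0` for all `y`, let `σ` be the pushforward of `f⁻ dV` under the
diagonal map, and set `ρ_L = B_L(x,y) f(x) dV(x) dV(y) + σ`. Then the first marginal of
`ρ_L` is `f⁺ dV` and the second marginal is `f⁻ dV`. -/
theorem signed_plan_marginals {M : Type*} [MeasurableSpace M]
    (V : Measure M) [IsFiniteMeasure V] [SigmaFinite V]
    (f : M → ℝ) (hf : Integrable f V)
    (B : M → M → ℝ)
    (hBint : Integrable (fun z : M × M => B z.1 z.2 * f z.1) (V.prod V))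
    (hB1 : ∀ x, ∫ y, B x y ∂V = 1)
    (hB2 : ∀ y, ∫ x, B x y * f x ∂V = 0)
    (σ : SignedMeasure (M × M))
    (hσ : σ = VectorMeasure.map (V.withDensityᵥ (fun x => max (- f x) 0))
        (fun x => (x, x)))
    (ρ : SignedMeasure (M × M))
    (hρ : ρ = (V.prod V).withDensityᵥ (fun z : M × M => B z.1 z.2 * f z.1) + σ) :
    VectorMeasure.map ρ Prod.fst = V.withDensityᵥ (fun x => max (f x) 0) ∧
    VectorMeasure.map ρ Prod.snd = V.withDensityᵥ (fun x => max (- f x) 0) := by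
  have hfneg : Integrable (fun x => max (- f x) 0) V := hf.neg.pos_part
  have hfpos : Integrable (fun x => max (f x) 0) V := hf.pos_part
  have hdiag : Measurable (fun x : M => (x, x)) := measurable_id.prodMk measurable_id
  -- σ's marginals
  have hσfst : ∀ s : Set M, MeasurableSet s →
      σ (Prod.fst ⁻¹' s) = ∫ x in s, max (- f x) 0 ∂V := by
    intro s hs
    have : (fun x : M => (x, x)) ⁻¹' (Prod.fst ⁻¹' s) = s := by ext x; simp
    rw [hσ, VectorMeasure.map_apply _ hdiag (hs.preimage measurable_fst), this,
      withDensityᵥ_apply hfneg hs]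
  have hσsnd : ∀ s : Set M, MeasurableSet s →
      σ (Prod.snd ⁻¹' s) = ∫ x in s, max (- f x) 0 ∂V := by
    intro s hs
    have : (fun x : M => (x, x)) ⁻¹' (Prod.snd ⁻¹' s) = s := by ext x; simp
    rw [hσ, VectorMeasure.map_apply _ hdiag (hs.preimage measurable_snd), this,
      withDensityᵥ_apply hfneg hs]
  constructor
  · ext s hs
    rw [VectorMeasure.map_apply _ measurable_fst hs, hρ, VectorMeasure.add_apply,
      withDensityᵥ_apply hBint (hs.preimage measurable_fst), hσfst s hs,
      withDensityᵥ_apply hfpos hs]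
    have h1 : ∫ z in Prod.fst ⁻¹' s, B z.1 z.2 * f z.1 ∂(V.prod V)
        = ∫ x in s, f x ∂V := by
      rw [← Set.prod_univ, setIntegral_prod _ hBint.integrableOn]
      refine setIntegral_congr_fun hs fun x _ => ?_
      simp only [Measure.restrict_univ]
      rw [integral_mul_const, hB1 x, one_mul]
    rw [h1, ← integral_add hf.integrableOn hfneg.integrableOn]
    refine setIntegral_congr_fun hs fun x _ => ?_
    rcases le_or_gt 0 (f x) with h | h
    · simp [max_eq_left, h, max_eq_right, neg_nonpos.mpr h]
    · have := h.le
      simp [max_eq_left (neg_nonneg.mpr this), max_eq_right this]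
  · ext s hs
    rw [VectorMeasure.map_apply _ measurable_snd hs, hρ, VectorMeasure.add_apply,
      withDensityᵥ_apply hBint (hs.preimage measurable_snd), hσsnd s hs,
      withDensityᵥ_apply hfneg hs]
    have h1 : ∫ z in Prod.snd ⁻¹' s, B z.1 z.2 * f z.1 ∂(V.prod V) = 0 := by
      have hpre : (Prod.snd ⁻¹' s : Set (M × M)) = Set.univ ×ˢ s := by ext z; simp
      have hmeas : (V.prod V).restrict (Set.univ ×ˢ s) = V.prod (V.restrict s) := by
        rw [← Measure.prod_restrict, Measure.restrict_univ]
      have hInt : Integrable (fun z : M × M => B z.1 z.2 * f z.1)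
          (V.prod (V.restrict s)) := by
        rw [← hmeas]; exact hBint.restrict
      have hswap : ∫ x, ∫ y, B x y * f x ∂(V.restrict s) ∂V
          = ∫ y, ∫ x, B x y * f x ∂V ∂(V.restrict s) :=
        integral_integral_swap hInt
      rw [hpre, hmeas]
      calc ∫ z, B z.1 z.2 * f z.1 ∂(V.prod (V.restrict s))
          = ∫ x, ∫ y, B x y * f x ∂(V.restrict s) ∂V := integral_prod _ hInt
        _ = ∫ y, ∫ x, B x y * f x ∂V ∂(V.restrict s) := hswap
        _ = 0 := by simp [hB2]
    rw [h1, zero_add]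
end

section
/- Let (M,g) be a smooth compact Riemannian manifold without boundary with V(M)=1, and suppose the kernel B_L satisfies |B_L(x,y)| ≤ C_N L^{d/2}/(1+√L·d(x,y))^N for some N > d+1 and all x,y. If f ∈ L²(M) is orthogonal to all Laplace eigenfunctions with eigenvalue < L, then W₁(f⁺, f⁻) ≤ C·L^{−1/2}·‖f‖_{L¹(M)}, where C depends only on (M,g), N, and C_N. -/
/-!
Testing against 1-Lipschitz functions `h`, `W₁(f⁺, f⁻)` is the supremum of `|∫ h f|`. The
smoothed function `g x = ∫ h(y) B(x, y) dy` is a combination of eigenfunctions with eigenvalue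
`< L`, so `∫ g f = 0` and `|∫ h f| ≤ ‖h - g‖_∞ ‖f‖₁`. Since `∫ B(x, ·) = 1`, the error
`|h x - g x|` is at most `∫ d(x, y) |B(x, y)| dy`. Bounding `d(x, y) ≤ L^{-1/2} (1 + √L d(x, y))`
and summing the remaining decay `(1 + √L d)^{1-N}` over the dyadic shells
`2^(k-1) ≤ √L d(x, y) < 2^k`, whose volumes are `≤ A 2^(kd) L^{-d/2}`, gives a geometric series
because `N - 1 > d`.
-/

open MeasureTheory

open Metric

/- The `u i` need not be integrable one by one, but the integral is linear on the subspace of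
coefficient vectors giving integrable combinations, and extends to a linear form on `ι → ℝ`. -/
theorem exists_integral_sum_mul_eq_sum_mul {α ι : Type*} [MeasurableSpace α] [Fintype ι]
    (μ : Measure α) (u : ι → α → ℝ) :
    ∃ c : ι → ℝ, ∀ w : ι → ℝ, Integrable (fun y => ∑ i, w i * u i y) μ →
      ∫ y, ∑ i, w i * u i y ∂μ = ∑ i, w i * c i := by
  classical
  let Φ : (ι → ℝ) →ₗ[ℝ] (α → ℝ) := Fintype.linearCombination ℝ u
  have hΦ : ∀ w, Φ w = fun y => ∑ i, w i * u i y := fun w => by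
    ext y
    simp [Φ, Fintype.linearCombination_apply, Finset.sum_apply]
  let S : Submodule ℝ (ι → ℝ) :=
    { carrier := {w | Integrable (Φ w) μ}
      add_mem' := fun hw hw' => show Integrable _ μ by rw [map_add]; exact hw.add hw'
      zero_mem' := by simp
      smul_mem' := fun c w hw => show Integrable _ μ by rw [map_smul]; exact hw.smul c }
  let T : S →ₗ[ℝ] ℝ :=
    { toFun := fun w => ∫ y, Φ w y ∂μ
      map_add' := fun w w' => by
        simp only [Submodule.coe_add, map_add, Pi.add_apply]
        exact integral_add w.2 w'.2
      map_smul' := fun c w => by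
        simp only [Submodule.coe_smul, map_smul, Pi.smul_apply, RingHom.id_apply]
        exact integral_smul c _ }
  obtain ⟨G, hG⟩ := LinearMap.exists_extend T
  refine ⟨fun i => G fun j => if i = j then 1 else 0, fun w hw => ?_⟩
  have hwS : w ∈ S := by simpa [S, hΦ] using hw
  calc ∫ y, ∑ i, w i * u i y ∂μ = T ⟨w, hwS⟩ := by simp [T, hΦ]
    _ = G w := by rw [← hG]; rfl
    _ = _ := by simpa [smul_eq_mul] using LinearMap.pi_apply_eq_sum_univ G w

theorem exists_integral_mul_sum_mul_mul_eq {α ι : Type*} [MeasurableSpace α] [Fintype ι]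
    (μ : Measure α) (h : α → ℝ) (φ : ι → α → ℝ) (b : ι → ℝ) :
    ∃ c : ι → ℝ, ∀ x, Integrable (fun y => h y * ∑ i, b i * φ i x * φ i y) μ →
      ∫ y, h y * ∑ i, b i * φ i x * φ i y ∂μ = ∑ i, φ i x * c i := by
  obtain ⟨c, hc⟩ := exists_integral_sum_mul_eq_sum_mul μ fun i y => b i * (h y * φ i y)
  refine ⟨c, fun x hx => ?_⟩
  have hsum : (fun y => h y * ∑ i, b i * φ i x * φ i y)
      = fun y => ∑ i, φ i x * (b i * (h y * φ i y)) := by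
    ext y
    rw [Finset.mul_sum]
    exact Finset.sum_congr rfl fun i _ => by ring
  rw [hsum] at hx ⊢
  exact hc _ hx

section

variable {α : Type*} [MeasurableSpace α] {μ : Measure α}

theorem integral_withDensity_ofReal_sub_integral_withDensity_ofReal_neg {f h : α → ℝ}
    (hf : Integrable f μ) (hh : AEStronglyMeasurable h μ) {C : ℝ} (hC : ∀ᵐ x ∂μ, ‖h x‖ ≤ C) :
    ∫ x, h x ∂μ.withDensity (fun x => ENNReal.ofReal (f x))
      - ∫ x, h x ∂μ.withDensity (fun x => ENNReal.ofReal (-f x)) = ∫ x, h x * f x ∂μ := by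
  have hpart : ∀ g : α → ℝ, Integrable g μ →
      ∫ x, h x ∂μ.withDensity (fun x => ENNReal.ofReal (g x)) = ∫ x, h x * max (g x) 0 ∂μ := by
    intro g hg
    rw [integral_withDensity_eq_integral_toReal_smul₀ (f := fun x => ENNReal.ofReal (g x))
      (ENNReal.measurable_ofReal.comp_aemeasurable hg.aemeasurable)
      (ae_of_all _ fun _ => ENNReal.ofReal_lt_top)]
    simp only [ENNReal.toReal_ofReal', smul_eq_mul, mul_comm]
  rw [hpart f hf, hpart (fun x => -f x) hf.neg, ← integral_sub (hf.pos_part.bdd_mul hh hC)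
    ((Integrable.pos_part (f := fun x => -f x) hf.neg).bdd_mul hh hC)]
  simp only [← mul_sub, max_zero_sub_max_neg_zero_eq_self]

theorem integrable_sum_mul_mul_and_integral_eq_zero {ι : Type*} [Fintype ι] {φ : ι → α → ℝ}
    {f : α → ℝ} (hφf : ∀ i, Integrable (fun x => φ i x * f x) μ)
    (horth : ∀ i, ∫ x, φ i x * f x ∂μ = 0) (b : ι → ℝ) :
    Integrable (fun x => (∑ i, φ i x * b i) * f x) μ ∧ ∫ x, (∑ i, φ i x * b i) * f x ∂μ = 0 := by
  have hsum : (fun x => (∑ i, φ i x * b i) * f x) = fun x => ∑ i, b i * (φ i x * f x) := by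
    ext x
    rw [Finset.sum_mul]
    exact Finset.sum_congr rfl fun i _ => by ring
  rw [hsum, integral_finsetSum _ fun i _ => (hφf i).const_mul _]
  exact ⟨integrable_finsetSum _ fun i _ => (hφf i).const_mul _,
    Finset.sum_eq_zero fun i _ => by rw [integral_const_mul, horth i, mul_zero]⟩

theorem abs_integral_mul_le_of_abs_sub_le {f h g : α → ℝ} {K : ℝ} (hf : Integrable f μ)
    (hhf : Integrable (fun x => h x * f x) μ) (hgf : Integrable (fun x => g x * f x) μ)
    (hg : ∫ x, g x * f x ∂μ = 0) (hK : ∀ x, |h x - g x| ≤ K) :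
    |∫ x, h x * f x ∂μ| ≤ K * ∫ x, |f x| ∂μ := by
  calc |∫ x, h x * f x ∂μ| = ‖∫ x, (h x - g x) * f x ∂μ‖ := by
        simp only [sub_mul]
        rw [integral_sub hhf hgf, hg, sub_zero, Real.norm_eq_abs]
    _ ≤ ∫ x, K * |f x| ∂μ := norm_integral_le_of_norm_le (hf.abs.const_mul K)
        (ae_of_all _ fun x => by
          rw [Real.norm_eq_abs, abs_mul]
          exact mul_le_mul_of_nonneg_right (hK x) (abs_nonneg _))
    _ = K * ∫ x, |f x| ∂μ := integral_const_mul K _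

theorem abs_sub_integral_mul_le_integral_dist_mul [PseudoMetricSpace α] {h k G : α → ℝ}
    (hh : LipschitzWith 1 h) (x : α) (hk : ∫ y, k y ∂μ = 1)
    (hhk : Integrable (fun y => h y * k y) μ) (hkG : ∀ y, |k y| ≤ G y)
    (hG : Integrable (fun y => dist x y * G y) μ) :
    |h x - ∫ y, h y * k y ∂μ| ≤ ∫ y, dist x y * G y ∂μ := by
  have hkint : Integrable k μ := Integrable.of_integral_ne_zero (by rw [hk]; exact one_ne_zero)
  have hsub : h x - ∫ y, h y * k y ∂μ = ∫ y, (h x - h y) * k y ∂μ := by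
    simp only [sub_mul]
    rw [integral_sub (hkint.const_mul (h x)) hhk, integral_const_mul, hk, mul_one]
  rw [hsub, ← Real.norm_eq_abs]
  refine norm_integral_le_of_norm_le hG (ae_of_all _ fun y => ?_)
  rw [Real.norm_eq_abs, abs_mul, ← Real.dist_eq]
  exact mul_le_mul (by simpa using hh.dist_le_mul x y) (hkG y) (abs_nonneg _) dist_nonneg

end

section DyadicShells

variable {α : Type*} [PseudoMetricSpace α]

theorem inv_one_add_mul_dist_rpow_le_of_mem_disjointed {x y : α} {s P : ℝ} (hs : 0 < s)
    (hP : 0 ≤ P) {k : ℕ} (hy : y ∈ disjointed (fun k : ℕ => ball x (2 ^ k / s)) k) :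
    ((1 + s * dist x y) ^ P)⁻¹ ≤ 2 ^ P / (2 ^ P) ^ k := by
  have hbase : 1 ≤ 1 + s * dist x y := by have := dist_nonneg (x := x) (y := y); nlinarith
  cases k with
  | zero =>
    rw [pow_zero, div_one]
    exact (inv_le_one_of_one_le₀ (Real.one_le_rpow hbase hP)).trans
      (Real.one_le_rpow one_le_two hP)
  | succ j =>
    have hmono : Monotone fun k : ℕ => ball x (2 ^ k / s) := fun i j hij =>
      ball_subset_ball (by gcongr; norm_num)
    rw [← Order.succ_eq_add_one, hmono.disjointed_succ (not_isMax j)] at hy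
    have hj : 2 ^ j ≤ s * dist x y := by
      have := hy.2
      rwa [mem_ball, not_lt, dist_comm, div_le_iff₀' hs] at this
    have hpow : (2 ^ P) ^ j ≤ (1 + s * dist x y) ^ P := by
      rw [Real.rpow_pow_comm zero_le_two]
      exact Real.rpow_le_rpow (by positivity) (by linarith) hP
    calc ((1 + s * dist x y) ^ P)⁻¹ ≤ ((2 ^ P) ^ j)⁻¹ := inv_anti₀ (by positivity) hpow
      _ = 2 ^ P / (2 ^ P) ^ (j + 1) := by rw [pow_succ]; field_simp

variable [MeasurableSpace α] [OpensMeasurableSpace α] {μ : Measure α} [IsFiniteMeasure μ]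

theorem integrable_div_one_add_mul_dist_rpow (c : ℝ) {s P : ℝ} (hs : 0 ≤ s) (hP : 0 ≤ P)
    (x : α) : Integrable (fun y => c / (1 + s * dist x y) ^ P) μ := by
  refine Integrable.of_bound (Measurable.aestronglyMeasurable (by fun_prop)) |c|
    (ae_of_all _ fun y => ?_)
  have hbase : 1 ≤ 1 + s * dist x y := by have := dist_nonneg (x := x) (y := y); nlinarith
  rw [norm_div, Real.norm_eq_abs, Real.norm_of_nonneg (by positivity)]
  exact div_le_self (abs_nonneg c) (Real.one_le_rpow hbase hP)

theorem integral_pow_div_one_add_mul_dist_rpow_le {d : ℕ} {A : ℝ}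
    (hball : ∀ (x : α) (r : ℝ), 0 < r → μ.real (ball x r) ≤ A * r ^ d) {P : ℝ} (hP : d < P)
    {s : ℝ} (hs : 0 < s) (x : α) :
    ∫ y, s ^ d / (1 + s * dist x y) ^ P ∂μ ≤ A * 2 ^ P / (1 - 2 ^ d / 2 ^ P) := by
  have hP0 : 0 ≤ P := (Nat.cast_nonneg d).trans hP.le
  set shell := disjointed fun k : ℕ => ball x (2 ^ k / s)
  have hcover : ⋃ k, shell k = Set.univ := by
    refine iUnion_disjointed.trans (Set.eq_univ_of_forall fun y => ?_)
    obtain ⟨k, hk⟩ := pow_unbounded_of_one_lt (s * dist y x) one_lt_two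
    exact Set.mem_iUnion.2 ⟨k, by rwa [mem_ball, lt_div_iff₀ hs, mul_comm]⟩
  have hsum : HasSum (fun k => ∫ y in shell k, s ^ d / (1 + s * dist x y) ^ P ∂μ)
      (∫ y, s ^ d / (1 + s * dist x y) ^ P ∂μ) := by
    have := hasSum_integral_iUnion (s := shell)
      (MeasurableSet.disjointed fun k => measurableSet_ball) (disjoint_disjointed _)
      (integrable_div_one_add_mul_dist_rpow (μ := μ) (s ^ d) hs.le hP0 x).integrableOn
    rwa [hcover, setIntegral_univ] at this
  have hq : 2 ^ d / 2 ^ P < (1 : ℝ) := by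
    rw [div_lt_one (by positivity), ← Real.rpow_natCast]
    exact Real.rpow_lt_rpow_of_exponent_lt one_lt_two hP
  have hshell : ∀ k, ∫ y in shell k, s ^ d / (1 + s * dist x y) ^ P ∂μ
      ≤ A * 2 ^ P * (2 ^ d / 2 ^ P) ^ k := by
    intro k
    have hbound : ∀ y ∈ shell k,
        ‖s ^ d / (1 + s * dist x y) ^ P‖ ≤ s ^ d * (2 ^ P / (2 ^ P) ^ k) := by
      intro y hy
      rw [Real.norm_of_nonneg (by positivity), div_eq_mul_inv]
      gcongr
      exact inv_one_add_mul_dist_rpow_le_of_mem_disjointed hs hP0 hy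
    calc ∫ y in shell k, s ^ d / (1 + s * dist x y) ^ P ∂μ
        ≤ s ^ d * (2 ^ P / (2 ^ P) ^ k) * μ.real (shell k) :=
          (le_abs_self _).trans (norm_setIntegral_le_of_norm_le_const (measure_lt_top _ _) hbound)
      _ ≤ s ^ d * (2 ^ P / (2 ^ P) ^ k) * (A * (2 ^ k / s) ^ d) := by
          gcongr
          exact (measureReal_mono (disjointed_subset _ k)).trans (hball x _ (by positivity))
      _ = A * 2 ^ P * (2 ^ d / 2 ^ P) ^ k := by
          rw [div_pow, div_pow, ← pow_mul, mul_comm k d, pow_mul]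
          field_simp
  have hgeom := (hasSum_geometric_of_lt_one (by positivity) hq).mul_left (A * 2 ^ P)
  simpa only [div_eq_mul_inv] using hasSum_le hshell hsum hgeom

theorem integral_dist_mul_kernel_bound_le {d : ℕ} {A : ℝ}
    (hball : ∀ (x : α) (r : ℝ), 0 < r → μ.real (ball x r) ≤ A * r ^ d) {N : ℝ}
    (hN : (d : ℝ) + 1 < N) {C_N : ℝ} (hC_N : 0 ≤ C_N) {L : ℝ} (hL : 0 < L) (x : α) :
    Integrable (fun y => dist x y * (C_N * L ^ ((d : ℝ) / 2) / (1 + √L * dist x y) ^ N)) μ ∧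
      ∫ y, dist x y * (C_N * L ^ ((d : ℝ) / 2) / (1 + √L * dist x y) ^ N) ∂μ
        ≤ C_N * (A * 2 ^ (N - 1) / (1 - 2 ^ d / 2 ^ (N - 1))) * L ^ (-(1 : ℝ) / 2) := by
  have hLd : L ^ ((d : ℝ) / 2) = √L ^ d := by
    rw [Real.sqrt_eq_rpow, ← Real.rpow_natCast, ← Real.rpow_mul hL.le]
    ring_nf
  have hLinv : L ^ (-(1 : ℝ) / 2) = (√L)⁻¹ := by
    rw [Real.sqrt_eq_rpow, ← Real.rpow_neg hL.le]
    ring_nf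
  simp only [hLd, hLinv]
  set s := √L
  have hs : 0 < s := Real.sqrt_pos.2 hL
  have hP0 : 0 ≤ N - 1 := by linarith [(Nat.cast_nonneg d : (0 : ℝ) ≤ d)]
  have hmajorant := (integrable_div_one_add_mul_dist_rpow (μ := μ) (s ^ d) hs.le hP0 x).const_mul
    (C_N * s⁻¹)
  -- `dist x y ≤ s⁻¹ (1 + s dist x y)` trades one power of the decay for the factor `s⁻¹`
  have hpoint : ∀ y, dist x y * (C_N * s ^ d / (1 + s * dist x y) ^ N)
      ≤ C_N * s⁻¹ * (s ^ d / (1 + s * dist x y) ^ (N - 1)) := by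
    intro y
    have hbase : 0 < 1 + s * dist x y := by positivity
    calc dist x y * (C_N * s ^ d / (1 + s * dist x y) ^ N)
        = C_N * s⁻¹ * (s ^ d / (1 + s * dist x y) ^ N) * (s * dist x y) := by
          field_simp
      _ ≤ C_N * s⁻¹ * (s ^ d / (1 + s * dist x y) ^ N) * (1 + s * dist x y) := by
          gcongr
          linarith
      _ = C_N * s⁻¹ * (s ^ d / (1 + s * dist x y) ^ (N - 1)) := by
          rw [Real.rpow_sub_one hbase.ne', div_div_eq_mul_div]
          ring
  have hint : Integrable (fun y => dist x y * (C_N * s ^ d / (1 + s * dist x y) ^ N)) μ :=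
    hmajorant.mono' (Measurable.aestronglyMeasurable (by fun_prop)) (ae_of_all _ fun y => by
      rw [Real.norm_of_nonneg (by positivity)]
      exact hpoint y)
  refine ⟨hint, ?_⟩
  calc ∫ y, dist x y * (C_N * s ^ d / (1 + s * dist x y) ^ N) ∂μ
      ≤ ∫ y, C_N * s⁻¹ * (s ^ d / (1 + s * dist x y) ^ (N - 1)) ∂μ :=
        integral_mono hint hmajorant hpoint
    _ ≤ C_N * s⁻¹ * (A * 2 ^ (N - 1) / (1 - 2 ^ d / 2 ^ (N - 1))) := by
        rw [integral_const_mul]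
        gcongr
        exact integral_pow_div_one_add_mul_dist_rpow_le hball (by linarith) hs x
    _ = _ := by ring

end DyadicShells

/-- Transport of high-frequency combinations of eigenfunctions (abstract form of the
theorem for a compact Riemannian manifold, with the Laplace eigenbasis encoded by the
functions `φ_i`, eigenvalues `λ_i`, and the Bochner–Riesz type kernel
`B_L(x,y) = ∑_{λ_i < L} a(λ_i/L) φ_i(x) φ_i(y)` satisfying the Sogge bound
`|B_L(x,y)| ≤ C_N L^{d/2}/(1+√L d(x,y))^N` for some `N > d+1`): there is a constant `C`,
depending only on `(M, V, d, A, N, C_N)`, such that whenever `f` is integrable with zero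
mean and orthogonal to all eigenfunctions with eigenvalue `< L`, `L ≥ 1`, then
`W₁(f⁺, f⁻) ≤ C·L^{-1/2}·‖f‖_{L¹(M)}`. -/
theorem wasserstein_high_frequency {M : Type*} [MetricSpace M] [CompactSpace M]
    [MeasurableSpace M] [BorelSpace M]
    (d : ℕ) (V : Measure M) [IsProbabilityMeasure V]
    (A : ℝ) (hA : 0 < A)
    (hball : ∀ (x : M) (s : ℝ), 0 < s → (V (Metric.ball x s)).toReal ≤ A * s ^ d)
    (N C_N : ℝ) (hN : (d : ℝ) + 1 < N) (hC_N : 0 < C_N) :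
    ∃ C : ℝ, 0 < C ∧
      ∀ (L : ℝ), 1 ≤ L →
      ∀ (φ : ℕ → M → ℝ) (lam : ℕ → ℝ) (a : ℝ → ℝ)
        (hfin : {i | lam i < L}.Finite)
        (f : M → ℝ), Integrable f V → (∫ x, f x ∂V) = 0 →
        (∀ i, Integrable (fun x => φ i x * f x) V) →
        (∀ i, lam i < L → ∫ x, φ i x * f x ∂V = 0) →
        ∀ B : M → M → ℝ,
        (B = fun x y => ∑ i ∈ hfin.toFinset, a (lam i / L) * φ i x * φ i y) →
        (∀ x, ∫ y, B x y ∂V = 1) →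
        (∀ x y, |B x y| ≤ C_N * L ^ ((d : ℝ) / 2) / (1 + Real.sqrt L * dist x y) ^ N) →
        W1 (V.withDensity (fun x => ENNReal.ofReal (f x)))
           (V.withDensity (fun x => ENNReal.ofReal (- f x)))
          ≤ C * L ^ (-(1 : ℝ) / 2) * ∫ x, |f x| ∂V := by
  have hq : (2 : ℝ) ^ d / 2 ^ (N - 1) < 1 := by
    rw [div_lt_one (by positivity), ← Real.rpow_natCast]
    exact Real.rpow_lt_rpow_of_exponent_lt one_lt_two (by linarith)
  have hC : 0 < C_N * (A * 2 ^ (N - 1) / (1 - 2 ^ d / 2 ^ (N - 1))) :=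
    mul_pos hC_N (div_pos (by positivity) (sub_pos.2 hq))
  refine ⟨_, hC, fun L hL φ lam a hfin f hf _ hφf horth B hB hB1 hBbd => ?_⟩
  replace hB : B = fun x y => ∑ i : hfin.toFinset, a (lam i / L) * φ i x * φ i y := by
    rw [hB]
    ext x y
    exact (Finset.sum_coe_sort _ _).symm
  refine Real.sSup_le ?_ (mul_nonneg (mul_nonneg hC.le (by positivity)) (by positivity))
  rintro _ ⟨h, hh, rfl⟩
  obtain ⟨Ch, hCh⟩ := isCompact_univ.exists_bound_of_continuousOn hh.continuous.continuousOn
  have hhm : AEStronglyMeasurable h V := hh.continuous.aestronglyMeasurable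
  have hhbdd : ∀ᵐ y ∂V, ‖h y‖ ≤ Ch := ae_of_all _ fun y => hCh y trivial
  have hhB : ∀ x, Integrable (fun y => h y * B x y) V := fun x =>
    (Integrable.of_integral_ne_zero (by rw [hB1 x]; exact one_ne_zero)).bdd_mul hhm hhbdd
  obtain ⟨c, hc⟩ := exists_integral_mul_sum_mul_mul_eq V h (fun i : hfin.toFinset => φ i)
    fun i => a (lam i / L)
  have hg : ∀ x, ∫ y, h y * B x y ∂V = ∑ i : hfin.toFinset, φ i x * c i := fun x => by
    simpa only [hB] using hc x (by simpa only [hB] using hhB x)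
  obtain ⟨hgf, hgf0⟩ := integrable_sum_mul_mul_and_integral_eq_zero
    (fun i : hfin.toFinset => hφf i) (fun i => horth i (hfin.mem_toFinset.1 i.2)) c
  rw [integral_withDensity_ofReal_sub_integral_withDensity_ofReal_neg hf hhm hhbdd]
  refine abs_integral_mul_le_of_abs_sub_le hf (hf.bdd_mul hhm hhbdd) hgf hgf0 fun x => ?_
  obtain ⟨hint, hle⟩ :=
    integral_dist_mul_kernel_bound_le hball hN hC_N.le (zero_lt_one.trans_le hL) x
  rw [← hg x]
  exact (abs_sub_integral_mul_le_integral_dist_mul hh x (hB1 x) (hhB x) (hBbd x) hint).trans hle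
end
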